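/- Let r ≥ 2 be an integer, set R = ℤ/2^rℤ and N = R^{⊕10} ⊕ ℤ/2ℤ. If M is an R-module fitting into a short exact sequence of R-modules 0 → N → M → ℤ/2ℤ → 0, then either M ≅ R^{⊕10} ⊕ ℤ/2ℤ ⊕ ℤ/2ℤ or M ≅ R^{⊕10} ⊕ ℤ/4ℤ as R-modules. -/

import Mathlib

/-!
Lift `1 ∈ ℤ/2` to `m ∈ M`. Then `2m = ι(v, t)`, and `2^(r-1) • (v, t) = 2^r • m = 0` forces
`v ∈ 2 • R^10`; correcting `m` by `ι(v/2, 0)` gives `2m = ι(0, t)`. If `t = 0`, then `m` splits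
the sequence; if `t = 1`, then `m` has order `4` and `(a, b) ↦ ι(a, 0) + b • m` is an isomorphism
`R^10 × ℤ/4 ≃ M`. Both isomorphisms follow from the short five lemma.
-/

open Function

namespace ZMod

theorem exists_eq_nsmul_of_pow_nsmul_eq_zero {n k : ℕ} (hn : n ≠ 0) {x : ZMod (n ^ (k + 1))}
    (hx : n ^ k • x = 0) : ∃ y : ZMod (n ^ (k + 1)), x = n • y := by
  obtain ⟨a, rfl⟩ := intCast_surjective x
  have hdvd : (n : ℤ) ^ k * n ∣ n ^ k * a := by
    rw [nsmul_eq_mul, ← Int.cast_natCast, ← Int.cast_mul, intCast_zmod_eq_zero_iff_dvd] at hx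
    exact_mod_cast hx
  obtain ⟨c, rfl⟩ := (mul_dvd_mul_iff_left (pow_ne_zero k (Int.natCast_ne_zero.2 hn))).1 hdvd
  exact ⟨c, by push_cast; rw [nsmul_eq_mul]⟩

variable {q n : ℕ} {M : Type*} [AddCommGroup M] [Module (ZMod q) M] [Module (ZMod q) (ZMod n)]

theorem linearMap_ext {f g : ZMod n →ₗ[ZMod q] M} (h : f 1 = g 1) : f = g := by
  ext b
  obtain ⟨z, rfl⟩ := intCast_surjective b
  rw [← zsmul_one, map_zsmul, map_zsmul, h]

def liftLinear (x : M) (hx : n • x = 0) : ZMod n →ₗ[ZMod q] M :=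
  (lift n ⟨zmultiplesHom M x, by simpa [natCast_zsmul] using hx⟩).toZModLinearMap q

theorem liftLinear_intCast (x : M) (hx : n • x = 0) (z : ℤ) :
    liftLinear (q := q) x hx z = z • x := by
  simp [liftLinear]

theorem liftLinear_natCast (x : M) (hx : n • x = 0) (k : ℕ) :
    liftLinear (q := q) x hx k = k • x := by
  simpa using liftLinear_intCast (q := q) x hx k

theorem liftLinear_apply [NeZero n] (x : M) (hx : n • x = 0) (b : ZMod n) :
    liftLinear (q := q) x hx b = b.val • x := by
  rw [← liftLinear_natCast (q := q) x hx, natCast_zmod_val]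

theorem liftLinear_one (x : M) (hx : n • x = 0) : liftLinear (q := q) x hx 1 = x := by
  simpa using liftLinear_intCast (q := q) x hx 1

end ZMod

theorem LinearMap.bijective_of_exact_of_exact {R N P M Q : Type*} [Ring R]
    [AddCommGroup N] [AddCommGroup P] [AddCommGroup M] [AddCommGroup Q]
    [Module R N] [Module R P] [Module R M] [Module R Q]
    {j : N →ₗ[R] P} {p : P →ₗ[R] Q} {ι : N →ₗ[R] M} {π : M →ₗ[R] Q} {φ : P →ₗ[R] M}
    (hjp : Exact j p) (hp : Surjective p) (hι : Injective ι) (hιπ : Exact ι π)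
    (hφj : φ ∘ₗ j = ι) (hπφ : π ∘ₗ φ = p) : Bijective φ := by
  refine ⟨(injective_iff_map_eq_zero φ).2 fun x hx => ?_, fun y => ?_⟩
  · obtain ⟨n, rfl⟩ := (hjp x).1 (by rw [← hπφ, comp_apply, hx, map_zero])
    rw [← comp_apply, hφj] at hx
    rw [(injective_iff_map_eq_zero ι).1 hι n hx, map_zero]
  · obtain ⟨x, hx⟩ := hp (π y)
    obtain ⟨n, hn⟩ := (hιπ (y - φ x)).1 (by rw [map_sub, ← comp_apply π, hπφ, hx, sub_self])
    refine ⟨x + j n, ?_⟩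
    rw [map_add, ← comp_apply φ, hφj, hn, add_sub_cancel]

section Extension

variable {q : ℕ} [Module (ZMod q) (ZMod 2)] {N M : Type*} [AddCommGroup N] [Module (ZMod q) N]
  [AddCommGroup M] [Module (ZMod q) M]

theorem nonempty_prod_zmod_two_equiv_of_two_nsmul_eq_zero {ι : N →ₗ[ZMod q] M}
    {π : M →ₗ[ZMod q] ZMod 2} (hι : Injective ι) (hιπ : Exact ι π) {m : M} (hm : π m = 1)
    (h2m : 2 • m = 0) : Nonempty ((N × ZMod 2) ≃ₗ[ZMod q] M) := by
  let φ := ι.coprod (ZMod.liftLinear m h2m)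
  have hπφ : π ∘ₗ φ = LinearMap.snd _ _ _ := by
    apply LinearMap.prod_ext
    · ext n
      simp [φ, hιπ.apply_apply_eq_zero]
    · exact ZMod.linearMap_ext (by simp [φ, ZMod.liftLinear_one, hm])
  exact ⟨.ofBijective φ (LinearMap.bijective_of_exact_of_exact Exact.inl_snd LinearMap.snd_surjective
    hι hιπ (LinearMap.coprod_inl _ _) hπφ)⟩

variable [Module (ZMod q) (ZMod 4)]

theorem nonempty_prod_zmod_four_equiv_of_two_nsmul_eq {ι : N × ZMod 2 →ₗ[ZMod q] M}
    {π : M →ₗ[ZMod q] ZMod 2} (hι : Injective ι) (hιπ : Exact ι π) {m : M} (hm : π m = 1)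
    (h2m : 2 • m = ι (0, 1)) : Nonempty ((N × ZMod 4) ≃ₗ[ZMod q] M) := by
  have h4m : 4 • m = 0 := by
    rw [show 4 = 2 * 2 by rfl, mul_nsmul, h2m, ← map_nsmul, Prod.smul_mk, smul_zero, two_nsmul,
      show (1 + 1 : ZMod 2) = 0 by decide, Prod.mk_zero_zero, map_zero]
  let dbl := ZMod.liftLinear (q := q) (n := 2) (2 : ZMod 4) (by decide)
  let ρ := ZMod.castHom (show 2 ∣ 4 by norm_num) (ZMod 2)
  let red := ρ.toAddMonoidHom.toZModLinearMap q
  let j := LinearMap.prodMap (LinearMap.id : N →ₗ[ZMod q] N) dbl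
  let p := red ∘ₗ LinearMap.snd (ZMod q) N (ZMod 4)
  let φ := (ι ∘ₗ LinearMap.inl (ZMod q) N (ZMod 2)).coprod (ZMod.liftLinear m h4m)
  have hjp : Exact j p := by
    rintro ⟨a, b⟩
    simp only [LinearMap.coe_comp, comp_apply, LinearMap.coe_snd, LinearMap.prodMap_apply,
      LinearMap.id_coe, id_eq, Set.mem_range, Prod.exists, Prod.mk.injEq, exists_eq_left,
      exists_and_left, p, j, red, ρ, dbl, AddMonoidHom.coe_toZModLinearMap,
      RingHom.toAddMonoidHom_eq_coe, AddMonoidHom.coe_coe, ZMod.castHom_apply,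
      ZMod.liftLinear_apply]
    revert b
    decide
  have hp : Surjective p :=
    (ZMod.ringHom_surjective ρ).comp LinearMap.snd_surjective
  have hφj : φ ∘ₗ j = ι := by
    apply LinearMap.prod_ext
    · ext n
      simp [φ, j]
    · refine ZMod.linearMap_ext ?_
      have h0 : ι (0, 0) = 0 := map_zero ι
      have h2 : ZMod.liftLinear (q := q) m h4m 2 = 2 • m := ZMod.liftLinear_natCast m h4m 2
      simp [φ, j, dbl, ZMod.liftLinear_one, h0, h2, h2m]
  have hπφ : π ∘ₗ φ = p := by
    apply LinearMap.prod_ext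
    · ext n
      simpa [φ, p] using hιπ.apply_apply_eq_zero (n, 0)
    · refine ZMod.linearMap_ext ?_
      have h0 : π (ι (0, 0)) = 0 := hιπ.apply_apply_eq_zero _
      simp [φ, p, red, ρ, ZMod.liftLinear_one, hm, h0]
  exact ⟨.ofBijective φ (LinearMap.bijective_of_exact_of_exact hjp hp hι hιπ hφj hπφ)⟩

end Extension

theorem exists_lift_two_nsmul_eq {κ : Type*} {k : ℕ} {M : Type*} [AddCommGroup M]
    [Module (ZMod (2 ^ (k + 1))) M] [Module (ZMod (2 ^ (k + 1))) (ZMod 2)]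
    {ι : (κ → ZMod (2 ^ (k + 1))) × ZMod 2 →ₗ[ZMod (2 ^ (k + 1))] M}
    {π : M →ₗ[ZMod (2 ^ (k + 1))] ZMod 2} (hι : Injective ι) (hιπ : Exact ι π)
    (hπ : Surjective π) : ∃ m, π m = 1 ∧ ∃ t, 2 • m = ι (0, t) := by
  obtain ⟨m₀, hm₀⟩ := hπ 1
  obtain ⟨⟨v, t⟩, hvt⟩ := (hιπ (2 • m₀)).1 (by rw [map_nsmul, hm₀]; decide)
  have hv : 2 ^ k • v = 0 := by
    have h : ι (2 ^ k • (v, t)) = ι 0 := by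
      rw [map_nsmul, hvt, ← mul_nsmul', ← pow_succ, ← Nat.cast_smul_eq_nsmul (ZMod (2 ^ (k + 1))),
        ZMod.natCast_self, zero_smul, map_zero]
    exact congrArg Prod.fst (hι h)
  obtain ⟨w, rfl⟩ : ∃ w, v = 2 • w := by
    choose w hw using fun i => ZMod.exists_eq_nsmul_of_pow_nsmul_eq_zero two_ne_zero
      (congrFun hv i)
    exact ⟨w, funext hw⟩
  refine ⟨m₀ - ι (w, 0), by simp [hm₀, hιπ.apply_apply_eq_zero], t, ?_⟩
  rw [smul_sub, ← hvt, ← map_nsmul, ← map_sub]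
  simp

/-- Let `r ≥ 2`, `R = ℤ/2^rℤ`, `N = R^{⊕10} ⊕ ℤ/2ℤ`.  If `M` is an `R`-module
fitting into a short exact sequence of `R`-modules `0 → N → M → ℤ/2ℤ → 0`, then
either `M ≅ R^{⊕10} ⊕ ℤ/2ℤ ⊕ ℤ/2ℤ` or `M ≅ R^{⊕10} ⊕ ℤ/4ℤ` as `R`-modules.
Here `ℤ/2ℤ` and `ℤ/4ℤ` are `R`-modules via the canonical surjections (these
`R`-module structures are unique, so we quantify over them as instances). -/
theorem stmt_2 (r : ℕ) (hr : 2 ≤ r)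
    [Module (ZMod (2 ^ r)) (ZMod 2)] [Module (ZMod (2 ^ r)) (ZMod 4)]
    (M : Type) [AddCommGroup M] [Module (ZMod (2 ^ r)) M]
    (ι : ((Fin 10 → ZMod (2 ^ r)) × ZMod 2) →ₗ[ZMod (2 ^ r)] M)
    (π : M →ₗ[ZMod (2 ^ r)] ZMod 2)
    (hι : Function.Injective ι) (hπ : Function.Surjective π)
    (hexact : LinearMap.range ι = LinearMap.ker π) :
    Nonempty (M ≃ₗ[ZMod (2 ^ r)] (Fin 10 → ZMod (2 ^ r)) × ZMod 2 × ZMod 2) ∨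
    Nonempty (M ≃ₗ[ZMod (2 ^ r)] (Fin 10 → ZMod (2 ^ r)) × ZMod 4) := by
  obtain ⟨k, rfl⟩ : ∃ k, r = k + 1 := ⟨r - 1, by omega⟩
  have hιπ : Exact ι π := LinearMap.exact_iff.2 hexact.symm
  obtain ⟨m, hm, t, h2m⟩ := exists_lift_two_nsmul_eq hι hιπ hπ
  obtain rfl | rfl : t = 0 ∨ t = 1 := (by decide : ∀ s : ZMod 2, s = 0 ∨ s = 1) t
  · obtain ⟨e⟩ := nonempty_prod_zmod_two_equiv_of_two_nsmul_eq_zero hι hιπ hm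
      (by rw [h2m, Prod.mk_zero_zero, map_zero])
    exact .inl ⟨e.symm.trans (LinearEquiv.prodAssoc _ _ _ _)⟩
  · obtain ⟨e⟩ := nonempty_prod_zmod_four_equiv_of_two_nsmul_eq hι hιπ hm h2m
    exact .inr ⟨e.symm⟩
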